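/- arXiv:2409.15703 — 4 statements merged into one kernel-verified Lean document; each statement's English description precedes it below -/
import Mathlib

section
/- In the deterministic POMDP of Example F1 (Fig. 1), with discount factor γ ∈ (0,1), the optimal performance over all stationary deterministic memoryless (Z_t = Y_t) policies equals (1 + γ − γ²)/(1 − γ³), which is strictly less than the optimal history-based performance 1/(1 − γ). -/
open scoped BigOperators
open Classical

/-- The set `D₀ = {n(n+1)/2 + 1 : n ∈ ℕ}` of states where action `0` (here `false`)
is the rewarding action. -/
def F1D0 (s : ℕ) : Prop := ∃ n : ℕ, s = n * (n + 1) / 2 + 1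

/-- The rewarding ("correct") action in state `s`: `false` (action 0) on `D₀`,
`true` (action 1) elsewhere. -/
noncomputable def F1correct (s : ℕ) : Bool := if F1D0 s then false else true

/-- Deterministic dynamics: the correct action moves right, the other resets to state 1. -/
noncomputable def F1step (s : ℕ) (a : Bool) : ℕ := if a = F1correct s then s + 1 else 1

/-- Reward: `+1` for the correct action, `−1` otherwise. -/
noncomputable def F1rew (s : ℕ) (a : Bool) : ℝ := if a = F1correct s then 1 else -1

/-- Binary observation (the cell colour): the parity of the state label. -/
def F1obs (s : ℕ) : Bool := s % 2 = 1

/-- State trajectory under a stationary deterministic memoryless (`Z_t = Y_t`) policy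
`g : Y → A`, started in state `1`. -/
noncomputable def F1traj (g : Bool → Bool) : ℕ → ℕ
  | 0 => 1
  | t + 1 => F1step (F1traj g t) (g (F1obs (F1traj g t)))

/-- Discounted performance of the memoryless policy `g`. -/
noncomputable def F1J (γ : ℝ) (g : Bool → Bool) : ℝ :=
  ∑' t : ℕ, γ ^ t * F1rew (F1traj g t) (g (F1obs (F1traj g t)))

lemma F1D0_1 : F1D0 1 := ⟨0, rfl⟩
lemma F1D0_2 : F1D0 2 := ⟨1, rfl⟩
lemma not_F1D0_3 : ¬ F1D0 3 := by
  rintro ⟨n, hn⟩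
  match n with
  | 0 => simp at hn
  | 1 => simp at hn
  | (n+2) =>
    have h6 : 6 ≤ (n+2) * (n+2+1) := by nlinarith
    have h3 : 3 ≤ (n+2) * (n+2+1) / 2 := by
      rw [Nat.le_div_iff_mul_le (by norm_num)]; omega
    omega

lemma F1correct_1 : F1correct 1 = false := by simp [F1correct, F1D0_1]
lemma F1correct_2 : F1correct 2 = false := by simp [F1correct, F1D0_2]
lemma F1correct_3 : F1correct 3 = true := by simp [F1correct, not_F1D0_3]

lemma traj_periodic (g : Bool → Bool) (p : ℕ) (hp : F1traj g p = 1) :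
    ∀ t, F1traj g (t + p) = F1traj g t := by
  intro t; induction t with
  | zero => simpa [F1traj] using hp
  | succ t ih =>
    have h : t + 1 + p = (t + p) + 1 := by omega
    rw [h]
    show F1step (F1traj g (t+p)) (g (F1obs (F1traj g (t+p)))) = _
    rw [ih]; rfl

lemma tsum_periodic (γ : ℝ) (hγ0 : 0 < γ) (hγ1 : γ < 1) (r : ℕ → ℝ)
    (hr : ∀ t, r t = 1 ∨ r t = -1) (p : ℕ) (hp : 0 < p)
    (hper : ∀ t, r (t + p) = r t) :
    ∑' t : ℕ, γ ^ t * r t = (∑ i ∈ Finset.range p, γ ^ i * r i) / (1 - γ ^ p) := by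
  have hsum : Summable (fun t : ℕ => γ ^ t * r t) := by
    apply Summable.of_norm
    have h : ∀ t, ‖γ ^ t * r t‖ = γ ^ t := by
      intro t
      rcases hr t with h | h <;>
        simp [h, abs_of_nonneg hγ0.le, abs_pow]
    simpa [h] using summable_geometric_of_lt_one hγ0.le hγ1
  have key := Summable.sum_add_tsum_nat_add (f := fun t : ℕ => γ ^ t * r t) p hsum
  have hshift : ∑' t : ℕ, γ ^ (t + p) * r (t + p) = γ ^ p * ∑' t : ℕ, γ ^ t * r t := by
    rw [← tsum_mul_left]
    congr 1; funext t
    rw [hper, pow_add]; ring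
  have hlt : γ ^ p < 1 := pow_lt_one₀ hγ0.le hγ1 hp.ne'
  have hne : 1 - γ ^ p ≠ 0 := by linarith
  rw [eq_div_iff hne]
  have h2 : (∑ i ∈ Finset.range p, γ ^ i * r i) + γ ^ p * ∑' t : ℕ, γ ^ t * r t
      = ∑' t : ℕ, γ ^ t * r t := by
    rw [← hshift]; exact key
  nlinarith [h2]

lemma evalA (γ : ℝ) (hγ0 : 0 < γ) (hγ1 : γ < 1) (g : Bool → Bool)
    (h1 : g true = false) (h2 : g false = false) :
    F1J γ g = (1 + γ - γ ^ 2) / (1 - γ ^ 3) := by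
  have e0 : F1traj g 0 = 1 := rfl
  have o1 : F1obs 1 = true := rfl
  have o2 : F1obs 2 = false := rfl
  have o3 : F1obs 3 = true := rfl
  have e1 : F1traj g 1 = 2 := by
    show F1step (F1traj g 0) (g (F1obs (F1traj g 0))) = 2
    rw [e0, o1, h1]; simp [F1step, F1correct_1]
  have e2 : F1traj g 2 = 3 := by
    show F1step (F1traj g 1) (g (F1obs (F1traj g 1))) = 3
    rw [e1, o2, h2]; simp [F1step, F1correct_2]
  have e3 : F1traj g 3 = 1 := by
    show F1step (F1traj g 2) (g (F1obs (F1traj g 2))) = 1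
    rw [e2, o3, h1]; simp [F1step, F1correct_3]
  set r : ℕ → ℝ := fun t => F1rew (F1traj g t) (g (F1obs (F1traj g t))) with hrdef
  have hr : ∀ t, r t = 1 ∨ r t = -1 := by
    intro t; simp only [hrdef, F1rew]; split <;> simp
  have hper : ∀ t, r (t + 3) = r t := by
    intro t; simp only [hrdef, traj_periodic g 3 e3 t]
  have := tsum_periodic γ hγ0 hγ1 r hr 3 (by norm_num) hper
  rw [F1J]
  rw [show (fun t : ℕ => γ ^ t * F1rew (F1traj g t) (g (F1obs (F1traj g t)))) = fun t => γ ^ t * r t from rfl] at *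
  rw [this]
  have r0 : r 0 = 1 := by simp [hrdef, e0, o1, h1, F1rew, F1correct_1]
  have r1 : r 1 = 1 := by simp [hrdef, e1, o2, h2, F1rew, F1correct_2]
  have r2 : r 2 = -1 := by simp [hrdef, e2, o3, h1, F1rew, F1correct_3]
  rw [Finset.sum_range_succ, Finset.sum_range_succ, Finset.sum_range_one, r0, r1, r2]
  ring_nf

lemma evalB (γ : ℝ) (hγ0 : 0 < γ) (hγ1 : γ < 1) (g : Bool → Bool)
    (h1 : g true = false) (h2 : g false = true) :
    F1J γ g = (1 - γ) / (1 - γ ^ 2) := by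
  have e0 : F1traj g 0 = 1 := rfl
  have o1 : F1obs 1 = true := rfl
  have o2 : F1obs 2 = false := rfl
  have e1 : F1traj g 1 = 2 := by
    show F1step (F1traj g 0) (g (F1obs (F1traj g 0))) = 2
    rw [e0, o1, h1]; simp [F1step, F1correct_1]
  have e2 : F1traj g 2 = 1 := by
    show F1step (F1traj g 1) (g (F1obs (F1traj g 1))) = 1
    rw [e1, o2, h2]; simp [F1step, F1correct_2]
  set r : ℕ → ℝ := fun t => F1rew (F1traj g t) (g (F1obs (F1traj g t))) with hrdef
  have hr : ∀ t, r t = 1 ∨ r t = -1 := by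
    intro t; simp only [hrdef, F1rew]; split <;> simp
  have hper : ∀ t, r (t + 2) = r t := by
    intro t; simp only [hrdef, traj_periodic g 2 e2 t]
  have := tsum_periodic γ hγ0 hγ1 r hr 2 (by norm_num) hper
  rw [F1J]
  rw [show (fun t : ℕ => γ ^ t * F1rew (F1traj g t) (g (F1obs (F1traj g t)))) = fun t => γ ^ t * r t from rfl] at *
  rw [this]
  have r0 : r 0 = 1 := by simp [hrdef, e0, o1, h1, F1rew, F1correct_1]
  have r1 : r 1 = -1 := by simp [hrdef, e1, o2, h2, F1rew, F1correct_2]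
  rw [Finset.sum_range_succ, Finset.sum_range_one, r0, r1]
  ring_nf

lemma evalC (γ : ℝ) (hγ0 : 0 < γ) (hγ1 : γ < 1) (g : Bool → Bool)
    (h1 : g true = true) :
    F1J γ g = (-1) / (1 - γ) := by
  have e0 : F1traj g 0 = 1 := rfl
  have o1 : F1obs 1 = true := rfl
  have e1 : F1traj g 1 = 1 := by
    show F1step (F1traj g 0) (g (F1obs (F1traj g 0))) = 1
    rw [e0, o1, h1]; simp [F1step, F1correct_1]
  set r : ℕ → ℝ := fun t => F1rew (F1traj g t) (g (F1obs (F1traj g t))) with hrdef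
  have hr : ∀ t, r t = 1 ∨ r t = -1 := by
    intro t; simp only [hrdef, F1rew]; split <;> simp
  have hper : ∀ t, r (t + 1) = r t := by
    intro t; simp only [hrdef, traj_periodic g 1 e1 t]
  have := tsum_periodic γ hγ0 hγ1 r hr 1 (by norm_num) hper
  rw [F1J]
  rw [show (fun t : ℕ => γ ^ t * F1rew (F1traj g t) (g (F1obs (F1traj g t)))) = fun t => γ ^ t * r t from rfl] at *
  rw [this]
  have r0 : r 0 = -1 := by simp [hrdef, e0, o1, h1, F1rew, F1correct_1]
  rw [Finset.sum_range_one, r0]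
  ring_nf

/-- In the deterministic POMDP of Example F1, the optimal performance over all stationary
deterministic memoryless policies equals `(1 + γ − γ²)/(1 − γ³)`, which is strictly less
than the optimal history-based performance `1/(1 − γ)`. -/
theorem stmt_9 (γ : ℝ) (hγ0 : 0 < γ) (hγ1 : γ < 1) :
    (⨆ g : Bool → Bool, F1J γ g) = (1 + γ - γ ^ 2) / (1 - γ ^ 3) ∧
      (1 + γ - γ ^ 2) / (1 - γ ^ 3) < 1 / (1 - γ) := by
  have h3 : (0:ℝ) < 1 - γ ^ 3 := by
    have := pow_lt_one₀ hγ0.le hγ1 (three_ne_zero); linarith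
  have h2 : (0:ℝ) < 1 - γ ^ 2 := by
    have := pow_lt_one₀ hγ0.le hγ1 (two_ne_zero); linarith
  have h1 : (0:ℝ) < 1 - γ := by linarith
  constructor
  · apply le_antisymm
    · apply ciSup_le
      intro g
      rcases Bool.dichotomy (g true) with ht | ht
      · rcases Bool.dichotomy (g false) with hf | hf
        · rw [evalA γ hγ0 hγ1 g ht hf]
        · rw [evalB γ hγ0 hγ1 g ht hf]
          rw [div_le_div_iff₀ h2 h3]
          nlinarith
      · rw [evalC γ hγ0 hγ1 g ht]
        rw [div_le_div_iff₀ h1 h3]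
        nlinarith
    · have hbdd : BddAbove (Set.range (F1J γ)) :=
        (Set.finite_range (F1J γ)).bddAbove
      calc (1 + γ - γ ^ 2) / (1 - γ ^ 3)
          = F1J γ (fun _ => false) := (evalA γ hγ0 hγ1 _ rfl rfl).symm
        _ ≤ ⨆ g : Bool → Bool, F1J γ g := le_ciSup hbdd _
  · rw [div_lt_div_iff₀ h3 h1]
    nlinarith [mul_pos (mul_pos hγ0 hγ0) h1]
end

section
/- Consider the blind 3-state POMDP of Example F2: S = {0,1,2}, A = {0,1}, no observations. Under action 0: states 0 and 2 are absorbing, state 1 moves to 0 or 2 each with probability 1/2; rewards r(·,0) = (−1, 0, 2). Under action 1: state 1 is absorbing, states 0 and 2 each stay with probability 1/2 and move to 1 with probability 1/2; reward r(s,1) = −0.5 for all s. The system starts in state 0 and γ = 0.9. For p ∈ [0,1], let π_p be the stationary policy that picks action 1 with probability p each period, with value J(p) = [(I − γP_p)^{-1} r_p]₀ where P_p = (1−p)P₀ + pP₁ and r_p = (1−p)r₀ + p r₁. Then there exists p ∈ (0,1) with J(p) > max(J(0), J(1)); i.e., the best stationary stochastic memoryless policy strictly outperforms every stationary deterministic memoryless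 policy. -/
open Matrix

/-!
`J p` is the state-0 entry of the value vector `v`, the unique solution of the Bellman equation
`v = r_p + γ P_p v`; uniqueness holds because `1 - γ P` is strictly diagonally dominant for any
row-stochastic `P` and `γ < 1`. Solving the Bellman equation at `p = 0, 1, 1/2` gives
`J 0 = -10`, `J 1 = -5` and `J (1/2) = -2445/806 ≈ -3.03`: always playing action 0 keeps the agent
stuck in state 0, always playing action 1 keeps paying `-0.5`, while mixing lets it drift from
state 0 through state 1 to the rewarding absorbing state 2.
-/

namespace Matrix

variable {n : Type*} [Fintype n] [DecidableEq n] {P : Matrix n n ℝ} {γ : ℝ}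

theorem det_one_sub_smul_ne_zero_of_mem_rowStochastic (hP : P ∈ rowStochastic ℝ n)
    (hγ₀ : 0 ≤ γ) (hγ₁ : γ < 1) : (1 - γ • P).det ≠ 0 := by
  refine det_ne_zero_of_sum_row_lt_diag fun k ↦ ?_
  have hoff : ∑ j ∈ Finset.univ.erase k, ‖(1 - γ • P) k j‖ = γ * (1 - P k k) := by
    rw [← sum_row_of_mem_rowStochastic hP k, ← Finset.add_sum_erase _ _ (Finset.mem_univ k),
      add_sub_cancel_left, Finset.mul_sum]
    refine Finset.sum_congr rfl fun j hj ↦ ?_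
    rw [sub_apply, one_apply_ne (Finset.ne_of_mem_erase hj).symm, smul_apply, smul_eq_mul,
      zero_sub, norm_neg, Real.norm_of_nonneg (mul_nonneg hγ₀ (hP.1 k j))]
  have hdiag : ‖(1 - γ • P) k k‖ = 1 - γ * P k k := by
    rw [sub_apply, one_apply_eq, smul_apply, smul_eq_mul, Real.norm_of_nonneg]
    nlinarith [le_one_of_mem_rowStochastic hP (i := k) (j := k)]
  rw [hoff, hdiag]
  linarith

theorem inv_one_sub_smul_mulVec_eq (hP : P ∈ rowStochastic ℝ n)
    (hγ₀ : 0 ≤ γ) (hγ₁ : γ < 1) {r v : n → ℝ} (hv : v = r + γ • (P *ᵥ v)) :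
    (1 - γ • P)⁻¹ *ᵥ r = v := by
  have : Invertible (1 - γ • P) :=
    invertibleOfIsUnitDet _ (det_one_sub_smul_ne_zero_of_mem_rowStochastic hP hγ₀ hγ₁).isUnit
  refine inv_mulVec_eq_vec ?_
  rw [sub_mulVec, one_mulVec, smul_mulVec, eq_sub_iff_add_eq, ← hv]

end Matrix

/-- In the blind 3-state POMDP of Example F2 (γ = 0.9, start in state 0), some stationary
stochastic memoryless policy `π_p`, `p ∈ (0,1)`, strictly outperforms both deterministic
stationary memoryless policies. -/
theorem stmt_11
    (P0 : Matrix (Fin 3) (Fin 3) ℝ) (hP0 : P0 = !![1, 0, 0; 1/2, 0, 1/2; 0, 0, 1])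
    (P1 : Matrix (Fin 3) (Fin 3) ℝ) (hP1 : P1 = !![1/2, 1/2, 0; 0, 1, 0; 0, 1/2, 1/2])
    (r0 : Fin 3 → ℝ) (hr0 : r0 = ![-1, 0, 2])
    (r1 : Fin 3 → ℝ) (hr1 : r1 = ![-0.5, -0.5, -0.5])
    (γ : ℝ) (hγ : γ = 0.9)
    (J : ℝ → ℝ)
    (hJ : ∀ p : ℝ, J p =
      ((1 - γ • ((1 - p) • P0 + p • P1))⁻¹ *ᵥ ((1 - p) • r0 + p • r1)) 0) :
    ∃ p : ℝ, 0 < p ∧ p < 1 ∧ J p > max (J 0) (J 1) := by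
  have hP0_mem : P0 ∈ rowStochastic ℝ (Fin 3) := by
    norm_num [hP0, mem_rowStochastic_iff_sum, Fin.forall_fin_succ, Fin.sum_univ_three, cons_val_two]
  have hP1_mem : P1 ∈ rowStochastic ℝ (Fin 3) := by
    norm_num [hP1, mem_rowStochastic_iff_sum, Fin.forall_fin_succ, Fin.sum_univ_three, cons_val_two]
  have hJ_eq (p : ℝ) (hp₀ : 0 ≤ p) (hp₁ : p ≤ 1) (v : Fin 3 → ℝ)
      (hv : v = ((1 - p) • r0 + p • r1) + γ • (((1 - p) • P0 + p • P1) *ᵥ v)) :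
      J p = v 0 := by
    have hmix :=
      convex_rowStochastic hP0_mem hP1_mem (sub_nonneg.2 hp₁) hp₀ (sub_add_cancel 1 p)
    rw [hJ, inv_one_sub_smul_mulVec_eq hmix (by norm_num [hγ]) (by norm_num [hγ]) hv]
  subst hP0 hP1 hr0 hr1 hγ
  have hJ0 : J 0 = -10 := hJ_eq 0 le_rfl zero_le_one ![-10, 9/2, 20] (by
    ext i; fin_cases i <;> norm_num [mulVec, dotProduct, Fin.sum_univ_three])
  have hJ1 : J 1 = -5 := hJ_eq 1 zero_le_one le_rfl ![-5, -5, -5] (by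
    ext i; fin_cases i <;> norm_num [mulVec, dotProduct, Fin.sum_univ_three])
  have hJhalf : J (1/2) = -2445/806 :=
    hJ_eq (1/2) (by norm_num) (by norm_num) ![-2445/806, -65/62, 1275/806] (by
      ext i; fin_cases i <;> norm_num [mulVec, dotProduct, Fin.sum_univ_three])
  refine ⟨1/2, by norm_num, by norm_num, ?_⟩
  rw [hJ0, hJ1, hJhalf]
  norm_num
end

section
/- (AIS one-step bound) Let (σ, P_AIS, r_AIS) be an (ε, δ)-approximate information state with constant sequences ε_t = ε, δ_t = δ, with respect to the IPM d_F. Let V_AIS be the fixed point of the AIS Bellman equation V_AIS(z) = max_a [r_AIS(z,a) + γ∑_{z'} P_AIS(z'|z,a)V_AIS(z')], and let π_AIS be a greedy policy. Then the suboptimality of the corresponding history-dependent policy satisfies J* − J^{π_AIS} ≤ (2/(1−γ))·[ε + γ·δ·ρ_F(V_AIS)]. -/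
open scoped BigOperators

section

variable {S A Y Z : Type*} [Fintype S] [Fintype A] [Fintype Y] [Fintype Z]

/-- Probability of a trajectory `(S_t,Y_t,A_t), …, (S_1,Y_1,A_1)` (listed most-recent
first) of a POMDP with initial law `ν` of `(S₁,Y₁)`, dynamics `P(s',y'|s,a)`, and a
history-dependent stochastic policy `π(a | past (y,a)-pairs, current y)`. -/
noncomputable def probTraj (ν : S × Y → ℝ) (P : S → A → S × Y → ℝ)
    (π : List (Y × A) → Y → A → ℝ) : List (S × Y × A) → ℝ
  | [] => 1
  | (s, y, a) :: rest =>
      (match rest with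
        | [] => ν (s, y)
        | (s₀, _, a₀) :: _ => P s₀ a₀ (s, y)) *
        π (rest.map fun u => (u.2.1, u.2.2)) y a * probTraj ν P π rest

/-- A valid (history-dependent) stochastic policy. -/
def validPol (π : List (Y × A) → Y → A → ℝ) : Prop :=
  ∀ h y, (∀ a, 0 ≤ π h y a) ∧ ∑ a, π h y a = 1

/-- Expected reward at time `t+1` (trajectories are indexed chronologically by `Fin (t+1)`
and reversed into the most-recent-first convention). -/
noncomputable def expRtime (ν : S × Y → ℝ) (P : S → A → S × Y → ℝ) (r : S → A → ℝ)
    (π : List (Y × A) → Y → A → ℝ) (t : ℕ) : ℝ :=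
  ∑ v : Fin (t + 1) → S × Y × A,
    probTraj ν P π (List.ofFn v).reverse * r (v (Fin.last t)).1 (v (Fin.last t)).2.2

/-- Performance `J^π = E^π[∑_{t≥1} γ^{t−1} R_t]` of a history-dependent policy. -/
noncomputable def valJ (γ : ℝ) (ν : S × Y → ℝ) (P : S → A → S × Y → ℝ)
    (r : S → A → ℝ) (π : List (Y × A) → Y → A → ℝ) : ℝ :=
  ∑' t : ℕ, γ ^ t * expRtime ν P r π t

/-- The agent state `Z_t = σ_t(H_t)` generated by the recursive update
`Z₁ = φ₀(Y₁)`, `Z_{t+1} = φ(Z_t, Y_{t+1}, A_t)`; the history is given as the list of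
past `(y,a)` pairs (most recent first) together with the current observation. -/
def sigAgg (φ0 : Y → Z) (φ : Z → Y → A → Z) : List (Y × A) → Y → Z
  | [], y => φ0 y
  | (y', a') :: rest, y => φ (sigAgg φ0 φ rest y') y a'

/-- The full trajectory obtained by attaching a state sequence to an observation-action
history (most recent first). -/
def zipSV (w : List (Y × A)) (sv : Fin w.length → S) : List (S × Y × A) :=
  List.ofFn fun i => (sv i, (w.get i).1, (w.get i).2)

/-- Probability of observing the observation-action history `w` (most recent first). -/
noncomputable def histProb (ν : S × Y → ℝ) (P : S → A → S × Y → ℝ)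
    (π : List (Y × A) → Y → A → ℝ) (w : List (Y × A)) : ℝ :=
  ∑ sv : Fin w.length → S, probTraj ν P π (zipSV w sv)

end

/-!
Fix a policy `π` and let `u_t = E^π[V_AIS(Z_{t+1})]` for `t ≥ 0`. Summation by parts gives
`J^π = u_0 + ∑_t γ^t (E^π[R_{t+1}] + γ u_{t+1} - u_t)`, where `u_0 = E[V_AIS(Z_1)]` does not
depend on `π`. Conditioning on the history `H_{t+1}`, (AP1) and (AP2), the latter tested
against `V_AIS / ρ ∈ F`, show that the bracket equals
`E^π[Q_AIS(Z_{t+1}, A_{t+1}) - V_AIS(Z_{t+1})]` up to `ε + γ δ ρ`. This expectation is `≤ 0`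
for every policy and `= 0` for the greedy one, hence
`J^π ≤ u_0 + (ε + γ δ ρ)/(1 - γ) ≤ J^{π_AIS} + 2 (ε + γ δ ρ)/(1 - γ)`.
-/

open Finset

theorem Fintype.sum_fin_succ_pi {T M : Type*} [Fintype T] [AddCommMonoid M] {n : ℕ}
    (g : (Fin (n + 1) → T) → M) :
    ∑ f, g f = ∑ x : T, ∑ f : Fin n → T, g (Fin.cons x f) := by
  rw [← (Fin.consEquiv fun _ => T).sum_comp g, Fintype.sum_prod_type]
  rfl

theorem Fintype.sum_fin_cast_pi {T M : Type*} [Fintype T] [AddCommMonoid M] {m n : ℕ}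
    (h : m = n) (g : (Fin m → T) → M) :
    ∑ f, g f = ∑ f : Fin n → T, g (f ∘ Fin.cast h) := by
  subst h
  rfl

theorem Fintype.sum_fin_rev_pi {T M : Type*} [Fintype T] [AddCommMonoid M] {n : ℕ}
    (g : (Fin n → T) → M) :
    ∑ f, g f = ∑ f : Fin n → T, g (f ∘ Fin.rev) :=
  (Fintype.sum_equiv (Equiv.arrowCongr Fin.revPerm (Equiv.refl T)) _ _ fun _ => rfl).symm

theorem Fintype.sum_prod_pi {ι T U M : Type*} [Fintype T] [Fintype U] [AddCommMonoid M]
    [Fintype ι] [DecidableEq ι] (g : (ι → T × U) → M) :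
    ∑ f, g f = ∑ a : ι → T, ∑ b : ι → U, g fun i => (a i, b i) := by
  rw [← (Equiv.arrowProdEquivProdArrow ι (fun _ => T) (fun _ => U)).symm.sum_comp g,
    Fintype.sum_prod_type]
  rfl

theorem List.reverse_ofFn {T : Type*} {n : ℕ} (v : Fin n → T) :
    (List.ofFn v).reverse = List.ofFn (v ∘ Fin.rev) := by
  rw [List.ofFn_eq_map, List.ofFn_eq_map, ← List.map_reverse, List.finRange_reverse,
    List.map_map]

theorem abs_sub_mul_le_mul_of_div {m w x ε : ℝ} (hw : 0 ≤ w) (h0 : w = 0 → m = 0)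
    (h : 0 < w → |m / w - x| ≤ ε) : |m - w * x| ≤ w * ε := by
  rcases hw.eq_or_lt with rfl | hpos
  · simp [h0 rfl]
  · rw [show m - w * x = w * (m / w - x) by field_simp, abs_mul, abs_of_pos hpos]
    exact mul_le_mul_of_nonneg_left (h hpos) hpos.le

theorem abs_add_mul_le_mul {a b w ε η γ : ℝ} (hγ : 0 ≤ γ) (ha : |a| ≤ w * ε)
    (hb : |b| ≤ w * η) : |a + γ * b| ≤ w * (ε + γ * η) := by
  calc |a + γ * b| ≤ |a| + γ * |b| :=
        (abs_add_le _ _).trans_eq (by rw [abs_mul, abs_of_nonneg hγ])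
    _ ≤ w * ε + γ * (w * η) := by gcongr
    _ = w * (ε + γ * η) := by ring

theorem summable_geometric_mul_of_abs_le {γ C : ℝ} {f : ℕ → ℝ} (hγ0 : 0 ≤ γ) (hγ1 : γ < 1)
    (hf : ∀ t, |f t| ≤ C) : Summable fun t => γ ^ t * f t :=
  ((summable_geometric_of_lt_one hγ0 hγ1).mul_right C).of_norm_bounded fun t => by
    rw [Real.norm_eq_abs, abs_mul, abs_of_nonneg (pow_nonneg hγ0 t)]
    exact mul_le_mul_of_nonneg_left (hf t) (pow_nonneg hγ0 t)

theorem tsum_geometric_mul_le_of_telescope {γ c C D : ℝ} {e u : ℕ → ℝ} (hγ0 : 0 ≤ γ)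
    (hγ1 : γ < 1) (he : ∀ t, |e t| ≤ C) (hu : ∀ t, |u t| ≤ D)
    (hstep : ∀ t, e t + γ * u (t + 1) - u t ≤ c) :
    ∑' t, γ ^ t * e t ≤ u 0 + c / (1 - γ) := by
  have hse := summable_geometric_mul_of_abs_le hγ0 hγ1 he
  have hsu := summable_geometric_mul_of_abs_le hγ0 hγ1 hu
  have hsu' := summable_geometric_mul_of_abs_le hγ0 hγ1 fun t => hu (t + 1)
  have hsd : Summable fun t => γ ^ t * (e t + γ * u (t + 1) - u t) :=
    (hse.add (hsu'.mul_left γ)).sub hsu |>.congr fun t => by ring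
  have hshift : ∑' t, γ ^ t * u t = u 0 + γ * ∑' t, γ ^ t * u (t + 1) := by
    rw [hsu.tsum_eq_zero_add, ← tsum_mul_left]
    simp only [pow_succ, pow_zero, one_mul, mul_assoc, mul_comm γ]
  calc ∑' t, γ ^ t * e t
      = u 0 + ∑' t, γ ^ t * (e t + γ * u (t + 1) - u t) := by
        simp only [mul_sub, mul_add, mul_left_comm (γ ^ _) γ]
        rw [(hse.add (hsu'.mul_left γ)).tsum_sub hsu, hse.tsum_add (hsu'.mul_left γ),
          tsum_mul_left, hshift]
        ring
    _ ≤ u 0 + ∑' t, γ ^ t * c := by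
        gcongr with t
        · exact (summable_geometric_of_lt_one hγ0 hγ1).mul_right c
        · exact hstep t
    _ = u 0 + c / (1 - γ) := by
        rw [tsum_mul_right, tsum_geometric_of_lt_one hγ0 hγ1, div_eq_inv_mul]

theorem le_tsum_geometric_mul_of_telescope {γ c C D : ℝ} {e u : ℕ → ℝ} (hγ0 : 0 ≤ γ)
    (hγ1 : γ < 1) (he : ∀ t, |e t| ≤ C) (hu : ∀ t, |u t| ≤ D)
    (hstep : ∀ t, -c ≤ e t + γ * u (t + 1) - u t) :
    u 0 - c / (1 - γ) ≤ ∑' t, γ ^ t * e t := by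
  have h := tsum_geometric_mul_le_of_telescope (e := -e) (u := -u) (c := c) hγ0 hγ1
    (fun t => by simpa using he t) (fun t => by simpa using hu t)
    (fun t => by simp only [Pi.neg_apply]; linarith [hstep t])
  simp only [Pi.neg_apply, mul_neg, tsum_neg] at h
  linarith

namespace AIS

variable {S A Y Z : Type*}

-- As in `probTraj`, trajectories are listed most recent first: index `0` is the current step.
def traj {n : ℕ} (sv : Fin n → S) (w : Fin n → Y × A) : List (S × Y × A) :=
  List.ofFn fun i => (sv i, w i)

theorem traj_succ {n : ℕ} (sv : Fin (n + 1) → S) (w : Fin (n + 1) → Y × A) :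
    traj sv w = (sv 0, w 0) :: traj (Fin.tail sv) (Fin.tail w) :=
  List.ofFn_succ

theorem zipSV_comp_cast {n : ℕ} {l : List (Y × A)} {w : Fin n → Y × A} (hl : l = List.ofFn w)
    (sv : Fin n → S) : zipSV l (sv ∘ Fin.cast (by simp [hl])) = traj sv w := by
  subst hl
  apply List.ext_getElem <;> simp [zipSV, traj]

variable (ν : S × Y → ℝ) (P : S → A → S × Y → ℝ) (π : List (Y × A) → Y → A → ℝ)

/-- The law of `(S, Y)` at the step following a trajectory of length `n`. -/
def nextLaw : (n : ℕ) → (Fin n → S) → (Fin n → Y × A) → S × Y → ℝ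
  | 0, _, _ => ν
  | _ + 1, sv, w => P (sv 0) (w 0).2

theorem probTraj_traj_succ {n : ℕ} (sv : Fin (n + 1) → S) (w : Fin (n + 1) → Y × A) :
    probTraj ν P π (traj sv w) =
      nextLaw ν P n (Fin.tail sv) (Fin.tail w) (sv 0, (w 0).1) *
        π (List.ofFn (Fin.tail w)) (w 0).1 (w 0).2 *
        probTraj ν P π (traj (Fin.tail sv) (Fin.tail w)) := by
  have hproj : (traj (Fin.tail sv) (Fin.tail w)).map (fun u => (u.2.1, u.2.2)) =
      List.ofFn (Fin.tail w) := by
    simp [traj, List.map_ofFn, Function.comp_def]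
  rw [traj_succ]
  simp only [probTraj, hproj]
  cases n with
  | zero => rfl
  | succ n => rw [traj_succ]; rfl

variable (φ0 : Y → Z) (φ : Z → Y → A → Z)

def agentState {n : ℕ} (w : Fin (n + 1) → Y × A) : Z :=
  sigAgg φ0 φ (List.ofFn (Fin.tail w)) (w 0).1

theorem sigAgg_ofFn {n : ℕ} (w : Fin (n + 1) → Y × A) (y : Y) :
    sigAgg φ0 φ (List.ofFn w) y = φ (agentState φ0 φ w) y (w 0).2 := by
  rw [List.ofFn_succ]
  rfl

section

variable [Fintype S]

noncomputable def histWeight {n : ℕ} (w : Fin n → Y × A) : ℝ :=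
  ∑ sv : Fin n → S, probTraj ν P π (traj sv w)

theorem sum_zipSV_cons_tail {n : ℕ} (w : Fin (n + 1) → Y × A) (h : S → ℝ) :
    ∑ sv : Fin (((w 0).1, (w 0).2) :: List.ofFn (Fin.tail w)).length → S,
        probTraj ν P π (zipSV (((w 0).1, (w 0).2) :: List.ofFn (Fin.tail w)) sv) *
          h (sv ⟨0, by simp⟩) =
      ∑ sv, probTraj ν P π (traj sv w) * h (sv 0) := by
  rw [Fintype.sum_fin_cast_pi (by simp : _ = n + 1)]
  refine sum_congr rfl fun sv _ => ?_
  have hl : ((w 0).1, (w 0).2) :: List.ofFn (Fin.tail w) = List.ofFn w := by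
    rw [List.ofFn_succ]
    rfl
  rw [zipSV_comp_cast hl]
  rfl

theorem histProb_cons_tail {n : ℕ} (w : Fin (n + 1) → Y × A) :
    histProb ν P π (((w 0).1, (w 0).2) :: List.ofFn (Fin.tail w)) = histWeight ν P π w := by
  have h := sum_zipSV_cons_tail ν P π w fun _ => 1
  simp only [mul_one] at h
  exact h

/-- (AP1) along the histories of positive probability under `π`. -/
def RewardApprox (r : S → A → ℝ) (rAIS : Z → A → ℝ) (ε : ℝ) : Prop :=
  ∀ (y : Y) (a : A) (past : List (Y × A)), 0 < histProb ν P π ((y, a) :: past) →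
    |(∑ sv : Fin ((y, a) :: past).length → S,
        probTraj ν P π (zipSV ((y, a) :: past) sv) * r (sv ⟨0, by simp⟩) a) /
      histProb ν P π ((y, a) :: past) - rAIS (sigAgg φ0 φ past y) a| ≤ ε

section Greedy

variable [DecidableEq A] (g : Z → A)

def greedyPolicy : List (Y × A) → Y → A → ℝ :=
  fun past y a => if a = g (sigAgg φ0 φ past y) then 1 else 0

theorem validPol_greedyPolicy [Fintype A] : validPol (greedyPolicy φ0 φ g) :=
  fun past y => ⟨fun a => by unfold greedyPolicy; split_ifs <;> norm_num,
    by simp [greedyPolicy]⟩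

theorem greedyPolicy_action_eq {n : ℕ} {w : Fin (n + 1) → Y × A}
    (hw : 0 < histWeight ν P (greedyPolicy φ0 φ g) w) : (w 0).2 = g (agentState φ0 φ w) := by
  by_contra hne
  have hπ : greedyPolicy φ0 φ g (List.ofFn (Fin.tail w)) (w 0).1 (w 0).2 = 0 := if_neg hne
  refine hw.ne' (sum_eq_zero fun sv _ => ?_)
  rw [probTraj_traj_succ, hπ, mul_zero, zero_mul]

end Greedy

variable [Fintype Y] [Fintype Z] [DecidableEq Z]

/-- (AP2), tested against the single function `f`, along the histories of positive
probability under `π`. -/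
def NextValueApprox (PAIS : Z → A → Z → ℝ) (f : Z → ℝ) (δ : ℝ) : Prop :=
  ∀ (y : Y) (a : A) (past : List (Y × A)), 0 < histProb ν P π ((y, a) :: past) →
    |∑ z' : Z, f z' *
        ((∑ sv : Fin ((y, a) :: past).length → S, ∑ sy' : S × Y,
            probTraj ν P π (zipSV ((y, a) :: past) sv) * P (sv ⟨0, by simp⟩) a sy' *
              (if z' = φ (sigAgg φ0 φ past y) sy'.2 a then 1 else 0)) /
          histProb ν P π ((y, a) :: past)) -
      ∑ z' : Z, f z' * PAIS (sigAgg φ0 φ past y) a z'| ≤ δ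

theorem NextValueApprox.const_mul {PAIS : Z → A → Z → ℝ} {f : Z → ℝ} {δ c : ℝ}
    (hc : 0 ≤ c) (h : NextValueApprox ν P π φ0 φ PAIS f δ) :
    NextValueApprox ν P π φ0 φ PAIS (fun z => c * f z) (c * δ) := fun y a past hpos => by
  have hpull : ∀ g : Z → ℝ, ∑ z', c * f z' * g z' = c * ∑ z', f z' * g z' := fun g => by
    simp only [Finset.mul_sum, mul_assoc]
  dsimp only
  rw [hpull, hpull, ← mul_sub, abs_mul, abs_of_nonneg hc]
  exact mul_le_mul_of_nonneg_left (h y a past hpos) hc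

theorem sum_mul_nextStateLaw_eq (f : Z → ℝ) (y : Y) (a : A) (past : List (Y × A)) :
    ∑ z' : Z, f z' *
        ((∑ sv : Fin ((y, a) :: past).length → S, ∑ sy' : S × Y,
            probTraj ν P π (zipSV ((y, a) :: past) sv) * P (sv ⟨0, by simp⟩) a sy' *
              (if z' = φ (sigAgg φ0 φ past y) sy'.2 a then 1 else 0)) /
          histProb ν P π ((y, a) :: past)) =
      (∑ sv : Fin ((y, a) :: past).length → S, probTraj ν P π (zipSV ((y, a) :: past) sv) *
          ∑ sy' : S × Y, P (sv ⟨0, by simp⟩) a sy' * f (φ (sigAgg φ0 φ past y) sy'.2 a)) /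
        histProb ν P π ((y, a) :: past) := by
  simp only [mul_div_assoc', ← Finset.sum_div, Finset.mul_sum]
  congr 1
  rw [Finset.sum_comm]
  refine sum_congr rfl fun sv _ => ?_
  rw [Finset.sum_comm]
  refine sum_congr rfl fun sy' _ => ?_
  simp only [mul_ite, mul_one, mul_zero, Finset.sum_ite_eq', Finset.mem_univ, if_true]
  ring

end

variable [Fintype S] [Fintype A] [Fintype Y]

noncomputable def trajExp (n : ℕ) (f : (Fin n → S) → (Fin n → Y × A) → ℝ) : ℝ :=
  ∑ w : Fin n → Y × A, ∑ sv : Fin n → S, probTraj ν P π (traj sv w) * f sv w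

theorem probTraj_nonneg (hν : ν ∈ stdSimplex ℝ (S × Y))
    (hP : ∀ s a, P s a ∈ stdSimplex ℝ (S × Y)) (hπ : validPol π) (l : List (S × Y × A)) :
    0 ≤ probTraj ν P π l := by
  induction l with
  | nil => exact zero_le_one
  | cons x rest ih =>
      obtain ⟨s, y, a⟩ := x
      refine mul_nonneg (mul_nonneg ?_ ((hπ _ _).1 a)) ih
      rcases rest with _ | ⟨⟨s₀, y₀, a₀⟩, _⟩
      · exact hν.1 _
      · exact (hP _ _).1 _

theorem histWeight_nonneg (hν : ν ∈ stdSimplex ℝ (S × Y))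
    (hP : ∀ s a, P s a ∈ stdSimplex ℝ (S × Y)) (hπ : validPol π) {n : ℕ} (w : Fin n → Y × A) :
    0 ≤ histWeight ν P π w :=
  sum_nonneg fun _ _ => probTraj_nonneg ν P π hν hP hπ _

theorem sum_probTraj_mul_eq_zero (hν : ν ∈ stdSimplex ℝ (S × Y))
    (hP : ∀ s a, P s a ∈ stdSimplex ℝ (S × Y)) (hπ : validPol π) {n : ℕ} {w : Fin n → Y × A}
    (hw : histWeight ν P π w = 0) (h : (Fin n → S) → ℝ) :
    ∑ sv, probTraj ν P π (traj sv w) * h sv = 0 := by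
  have hzero := (sum_eq_zero_iff_of_nonneg fun sv _ => probTraj_nonneg ν P π hν hP hπ _).1 hw
  exact sum_eq_zero fun sv hsv => by rw [hzero sv hsv, zero_mul]

theorem trajExp_succ (hπ : validPol π) (n : ℕ) (K : (Fin n → Y × A) → Y → ℝ) :
    trajExp ν P π (n + 1) (fun _ w => K (Fin.tail w) (w 0).1) =
      trajExp ν P π n fun sv w => ∑ sy, nextLaw ν P n sv w sy * K w sy.2 := by
  simp only [trajExp, Fintype.sum_fin_succ_pi, probTraj_traj_succ, Fin.tail_cons, Fin.cons_zero]
  rw [Finset.sum_comm]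
  refine sum_congr rfl fun w _ => ?_
  calc _ = ∑ y, ∑ s, ∑ sv, nextLaw ν P n sv w (s, y) * probTraj ν P π (traj sv w) * K w y := by
        -- the current action is summed out, as the policy weights sum to `1`
        rw [Fintype.sum_prod_type]
        refine sum_congr rfl fun y _ => ?_
        rw [Finset.sum_comm]
        refine sum_congr rfl fun s _ => ?_
        rw [Finset.sum_comm]
        refine sum_congr rfl fun sv _ => ?_
        dsimp only
        rw [← Finset.sum_mul, ← Finset.sum_mul, ← Finset.mul_sum, (hπ _ y).2, mul_one]
    _ = ∑ sv, ∑ s, ∑ y, nextLaw ν P n sv w (s, y) * probTraj ν P π (traj sv w) * K w y :=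
        Finset.sum_comm.trans <| (sum_congr rfl fun _ _ => Finset.sum_comm).trans Finset.sum_comm
    _ = _ := by
        simp only [Finset.mul_sum, Fintype.sum_prod_type]
        refine sum_congr rfl fun sv _ => sum_congr rfl fun s _ => sum_congr rfl fun y _ => ?_
        ring

theorem trajExp_eq_sum_histWeight (n : ℕ) (f : (Fin n → Y × A) → ℝ) :
    trajExp ν P π n (fun _ w => f w) = ∑ w, histWeight ν P π w * f w :=
  sum_congr rfl fun _ _ => (Finset.sum_mul _ _ _).symm

theorem sum_histWeight (hν : ν ∈ stdSimplex ℝ (S × Y)) (hP : ∀ s a, P s a ∈ stdSimplex ℝ (S × Y))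
    (hπ : validPol π) : ∀ n, ∑ w : Fin n → Y × A, histWeight ν P π w = 1
  | 0 => by simp [histWeight, traj, probTraj]
  | n + 1 => by
      have hlaw : ∀ sv w, ∑ sy, nextLaw ν P n sv w sy = 1 := by
        intro sv w
        cases n
        exacts [hν.2, (hP _ _).2]
      have h := trajExp_succ ν P π hπ n fun _ _ => 1
      simp only [mul_one, hlaw, trajExp_eq_sum_histWeight] at h
      rw [h, sum_histWeight hν hP hπ n]

theorem abs_trajExp_le (hν : ν ∈ stdSimplex ℝ (S × Y)) (hP : ∀ s a, P s a ∈ stdSimplex ℝ (S × Y))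
    (hπ : validPol π) {n : ℕ} {C : ℝ} {f : (Fin n → S) → (Fin n → Y × A) → ℝ}
    (hf : ∀ sv w, |f sv w| ≤ C) : |trajExp ν P π n f| ≤ C := by
  have hp := probTraj_nonneg ν P π hν hP hπ
  calc |trajExp ν P π n f|
      ≤ ∑ w : Fin n → Y × A, ∑ sv : Fin n → S, |probTraj ν P π (traj sv w) * f sv w| := by
        refine (abs_sum_le_sum_abs _ _).trans (sum_le_sum fun w _ => ?_)
        exact abs_sum_le_sum_abs _ _
    _ ≤ trajExp ν P π n (fun _ _ => C) := by
        refine sum_le_sum fun w _ => sum_le_sum fun sv _ => ?_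
        rw [abs_mul, abs_of_nonneg (hp _)]
        exact mul_le_mul_of_nonneg_left (hf sv w) (hp _)
    _ = C := by
        rw [trajExp_eq_sum_histWeight ν P π n fun _ => C, ← sum_mul,
          sum_histWeight ν P π hν hP hπ, one_mul]

theorem expRtime_eq_trajExp (r : S → A → ℝ) (t : ℕ) :
    expRtime ν P r π t = trajExp ν P π (t + 1) fun sv w => r (sv 0) (w 0).2 := by
  rw [expRtime, Fintype.sum_prod_pi, Finset.sum_comm, Fintype.sum_fin_rev_pi]
  refine sum_congr rfl fun w _ => ?_
  rw [Fintype.sum_fin_rev_pi]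
  refine sum_congr rfl fun sv _ => ?_
  simp only [List.reverse_ofFn, Function.comp_def, Fin.rev_rev, Fin.rev_last]
  rfl

theorem abs_expRtime_le (hν : ν ∈ stdSimplex ℝ (S × Y)) (hP : ∀ s a, P s a ∈ stdSimplex ℝ (S × Y))
    (hπ : validPol π) {r : S → A → ℝ} {R : ℝ} (hr : ∀ s a, |r s a| ≤ R) (t : ℕ) :
    |expRtime ν P r π t| ≤ R := by
  rw [expRtime_eq_trajExp]
  exact abs_trajExp_le ν P π hν hP hπ fun _ _ => hr _ _

theorem abs_reward_sub_le (hν : ν ∈ stdSimplex ℝ (S × Y))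
    (hP : ∀ s a, P s a ∈ stdSimplex ℝ (S × Y)) (hπ : validPol π) {r : S → A → ℝ}
    {rAIS : Z → A → ℝ} {ε : ℝ} (hAP1 : RewardApprox ν P π φ0 φ r rAIS ε) {n : ℕ}
    (w : Fin (n + 1) → Y × A) :
    |∑ sv, probTraj ν P π (traj sv w) * r (sv 0) (w 0).2 -
        histWeight ν P π w * rAIS (agentState φ0 φ w) (w 0).2| ≤ histWeight ν P π w * ε := by
  refine abs_sub_mul_le_mul_of_div (histWeight_nonneg ν P π hν hP hπ w)
    (fun h0 => sum_probTraj_mul_eq_zero ν P π hν hP hπ h0 _) fun hpos => ?_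
  have h := hAP1 (w 0).1 (w 0).2 (List.ofFn (Fin.tail w)) (by rwa [histProb_cons_tail])
  rwa [sum_zipSV_cons_tail ν P π w (r · (w 0).2), histProb_cons_tail] at h

/-- `E^π[V(Z_{t+1})]`. -/
noncomputable def agentValue (V : Z → ℝ) (t : ℕ) : ℝ :=
  trajExp ν P π (t + 1) fun _ w => V (agentState φ0 φ w)

theorem agentValue_eq_trajExp (hπ : validPol π) (V : Z → ℝ) (t : ℕ) :
    agentValue ν P π φ0 φ V t =
      trajExp ν P π t fun sv w => ∑ sy, nextLaw ν P t sv w sy * V (sigAgg φ0 φ (List.ofFn w) sy.2) :=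
  trajExp_succ ν P π hπ t fun w y => V (sigAgg φ0 φ (List.ofFn w) y)

theorem agentValue_zero (hπ : validPol π) (V : Z → ℝ) :
    agentValue ν P π φ0 φ V 0 = ∑ sy, ν sy * V (φ0 sy.2) := by
  simp [agentValue_eq_trajExp ν P π φ0 φ hπ, trajExp, traj, probTraj, nextLaw, sigAgg]

theorem agentValue_succ (hπ : validPol π) (V : Z → ℝ) (t : ℕ) :
    agentValue ν P π φ0 φ V (t + 1) = trajExp ν P π (t + 1) fun sv w =>
      ∑ sy, P (sv 0) (w 0).2 sy * V (φ (agentState φ0 φ w) sy.2 (w 0).2) := by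
  simp only [agentValue_eq_trajExp ν P π φ0 φ hπ, sigAgg_ofFn]
  rfl

variable [Fintype Z]

theorem abs_agentValue_le (hν : ν ∈ stdSimplex ℝ (S × Y))
    (hP : ∀ s a, P s a ∈ stdSimplex ℝ (S × Y)) (hπ : validPol π) (V : Z → ℝ) (t : ℕ) :
    |agentValue ν P π φ0 φ V t| ≤ ∑ z, |V z| :=
  abs_trajExp_le ν P π hν hP hπ fun _ _ => single_le_sum (fun z _ => abs_nonneg (V z)) (mem_univ _)

variable [DecidableEq Z]

theorem abs_nextValue_sub_le (hν : ν ∈ stdSimplex ℝ (S × Y))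
    (hP : ∀ s a, P s a ∈ stdSimplex ℝ (S × Y)) (hπ : validPol π) {PAIS : Z → A → Z → ℝ}
    {f : Z → ℝ} {δ : ℝ} (hAP2 : NextValueApprox ν P π φ0 φ PAIS f δ) {n : ℕ}
    (w : Fin (n + 1) → Y × A) :
    |∑ sv, probTraj ν P π (traj sv w) *
          ∑ sy, P (sv 0) (w 0).2 sy * f (φ (agentState φ0 φ w) sy.2 (w 0).2) -
        histWeight ν P π w * ∑ z', PAIS (agentState φ0 φ w) (w 0).2 z' * f z'| ≤
      histWeight ν P π w * δ := by
  refine abs_sub_mul_le_mul_of_div (histWeight_nonneg ν P π hν hP hπ w)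
    (fun h0 => sum_probTraj_mul_eq_zero ν P π hν hP hπ h0 _) fun hpos => ?_
  have h := hAP2 (w 0).1 (w 0).2 (List.ofFn (Fin.tail w)) (by rwa [histProb_cons_tail])
  have hz : sigAgg φ0 φ (List.ofFn (Fin.tail w)) (w 0).1 = agentState φ0 φ w := rfl
  rw [sum_mul_nextStateLaw_eq, histProb_cons_tail, hz, sum_zipSV_cons_tail ν P π w fun s =>
    ∑ sy, P s (w 0).2 sy * f (φ (agentState φ0 φ w) sy.2 (w 0).2)] at h
  simpa only [mul_comm (f _)] using h

theorem abs_bellman_residual_le (hν : ν ∈ stdSimplex ℝ (S × Y))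
    (hP : ∀ s a, P s a ∈ stdSimplex ℝ (S × Y)) (hπ : validPol π) {γ ε η : ℝ} (hγ : 0 ≤ γ)
    {r : S → A → ℝ} {rAIS : Z → A → ℝ} {PAIS : Z → A → Z → ℝ} {Q : Z → A → ℝ} {V : Z → ℝ}
    (hAP1 : RewardApprox ν P π φ0 φ r rAIS ε) (hAP2 : NextValueApprox ν P π φ0 φ PAIS V η)
    (hQ : ∀ z a, Q z a = rAIS z a + γ * ∑ z', PAIS z a z' * V z') (t : ℕ) :
    |expRtime ν P r π t + γ * agentValue ν P π φ0 φ V (t + 1) - agentValue ν P π φ0 φ V t -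
        ∑ w : Fin (t + 1) → Y × A,
          histWeight ν P π w * (Q (agentState φ0 φ w) (w 0).2 - V (agentState φ0 φ w))| ≤
      ε + γ * η := by
  rw [expRtime_eq_trajExp, agentValue_succ ν P π φ0 φ hπ, agentValue,
    trajExp_eq_sum_histWeight, trajExp, trajExp, Finset.mul_sum, ← sum_add_distrib,
    ← sum_sub_distrib, ← sum_sub_distrib]
  calc _ ≤ ∑ w : Fin (t + 1) → Y × A, histWeight ν P π w * (ε + γ * η) := by
        refine (abs_sum_le_sum_abs _ _).trans (sum_le_sum fun w _ => ?_)
        have hR := abs_reward_sub_le ν P π φ0 φ hν hP hπ hAP1 w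
        have hN := abs_nextValue_sub_le ν P π φ0 φ hν hP hπ hAP2 w
        rw [hQ]
        refine (congrArg abs ?_).trans_le (abs_add_mul_le_mul hγ hR hN)
        ring
    _ = ε + γ * η := by rw [← sum_mul, sum_histWeight ν P π hν hP hπ, one_mul]

theorem valJ_le_of_approx (hν : ν ∈ stdSimplex ℝ (S × Y))
    (hP : ∀ s a, P s a ∈ stdSimplex ℝ (S × Y)) (hπ : validPol π) {γ ε η R : ℝ} (hγ0 : 0 ≤ γ)
    (hγ1 : γ < 1) {r : S → A → ℝ} (hr : ∀ s a, |r s a| ≤ R) {rAIS : Z → A → ℝ}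
    {PAIS : Z → A → Z → ℝ} {Q : Z → A → ℝ} {V : Z → ℝ}
    (hAP1 : RewardApprox ν P π φ0 φ r rAIS ε) (hAP2 : NextValueApprox ν P π φ0 φ PAIS V η)
    (hQ : ∀ z a, Q z a = rAIS z a + γ * ∑ z', PAIS z a z' * V z') (hQV : ∀ z a, Q z a ≤ V z) :
    valJ γ ν P r π ≤ ∑ sy, ν sy * V (φ0 sy.2) + (ε + γ * η) / (1 - γ) := by
  rw [valJ, ← agentValue_zero ν P π φ0 φ hπ V]
  refine tsum_geometric_mul_le_of_telescope hγ0 hγ1 (abs_expRtime_le ν P π hν hP hπ hr)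
    (abs_agentValue_le ν P π φ0 φ hν hP hπ V) fun t => ?_
  have hres := abs_bellman_residual_le ν P π φ0 φ hν hP hπ hγ0 hAP1 hAP2 hQ t
  have hgap : ∑ w : Fin (t + 1) → Y × A,
      histWeight ν P π w * (Q (agentState φ0 φ w) (w 0).2 - V (agentState φ0 φ w)) ≤ 0 :=
    sum_nonpos fun w _ => mul_nonpos_of_nonneg_of_nonpos (histWeight_nonneg ν P π hν hP hπ w)
      (sub_nonpos.2 (hQV _ _))
  linarith [(abs_le.1 hres).2]

theorem le_valJ_of_approx (hν : ν ∈ stdSimplex ℝ (S × Y))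
    (hP : ∀ s a, P s a ∈ stdSimplex ℝ (S × Y)) (hπ : validPol π) {γ ε η R : ℝ} (hγ0 : 0 ≤ γ)
    (hγ1 : γ < 1) {r : S → A → ℝ} (hr : ∀ s a, |r s a| ≤ R) {rAIS : Z → A → ℝ}
    {PAIS : Z → A → Z → ℝ} {Q : Z → A → ℝ} {V : Z → ℝ}
    (hAP1 : RewardApprox ν P π φ0 φ r rAIS ε) (hAP2 : NextValueApprox ν P π φ0 φ PAIS V η)
    (hQ : ∀ z a, Q z a = rAIS z a + γ * ∑ z', PAIS z a z' * V z')
    (hQV : ∀ (t : ℕ) (w : Fin (t + 1) → Y × A), 0 < histWeight ν P π w →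
      Q (agentState φ0 φ w) (w 0).2 = V (agentState φ0 φ w)) :
    ∑ sy, ν sy * V (φ0 sy.2) - (ε + γ * η) / (1 - γ) ≤ valJ γ ν P r π := by
  rw [valJ, ← agentValue_zero ν P π φ0 φ hπ V]
  refine le_tsum_geometric_mul_of_telescope hγ0 hγ1 (abs_expRtime_le ν P π hν hP hπ hr)
    (abs_agentValue_le ν P π φ0 φ hν hP hπ V) fun t => ?_
  have hres := abs_bellman_residual_le ν P π φ0 φ hν hP hπ hγ0 hAP1 hAP2 hQ t
  have hgap : ∑ w : Fin (t + 1) → Y × A,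
      histWeight ν P π w * (Q (agentState φ0 φ w) (w 0).2 - V (agentState φ0 φ w)) = 0 := by
    refine sum_eq_zero fun w _ => ?_
    rcases (histWeight_nonneg ν P π hν hP hπ w).eq_or_lt with h0 | hpos
    · rw [← h0, zero_mul]
    · rw [hQV t w hpos, sub_self, mul_zero]
  linarith [(abs_le.1 hres).1]

end AIS

section

variable {S A Y Z : Type*} [Fintype S] [Fintype A] [Fintype Y] [Fintype Z]

open AIS

/-- `ρ` is any admissible scaling, `V_AIS / ρ ∈ F`; their infimum is `ρ_F(V_AIS)`. -/
theorem stmt_15 [DecidableEq A] [DecidableEq Z]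
    (γ : ℝ) (hγ0 : 0 < γ) (hγ1 : γ < 1)
    (Rmax : ℝ) (r : S → A → ℝ) (hr : ∀ s a, r s a ∈ Set.Icc (0 : ℝ) Rmax)
    (ν : S × Y → ℝ) (hν0 : ∀ sy, 0 ≤ ν sy) (hν1 : ∑ sy : S × Y, ν sy = 1)
    (P : S → A → S × Y → ℝ) (hP0 : ∀ s a sy, 0 ≤ P s a sy)
    (hP1 : ∀ s a, ∑ sy : S × Y, P s a sy = 1)
    (φ0 : Y → Z) (φ : Z → Y → A → Z)
    (F : Set (Z → ℝ))
    (rAIS : Z → A → ℝ) (PAIS : Z → A → Z → ℝ)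
    (ε δ : ℝ)
    -- (AP1): approximately sufficient for performance evaluation
    (hAP1 : ∀ π : List (Y × A) → Y → A → ℝ, validPol π →
      ∀ (y : Y) (a : A) (past : List (Y × A)),
        0 < histProb ν P π ((y, a) :: past) →
        |(∑ sv : Fin ((y, a) :: past).length → S,
            probTraj ν P π (zipSV ((y, a) :: past) sv) * r (sv ⟨0, by simp⟩) a) /
          histProb ν P π ((y, a) :: past) - rAIS (sigAgg φ0 φ past y) a| ≤ ε)
    -- (AP2): approximately sufficient for predicting itself, in the IPM `d_F`
    (hAP2 : ∀ π : List (Y × A) → Y → A → ℝ, validPol π →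
      ∀ (y : Y) (a : A) (past : List (Y × A)),
        0 < histProb ν P π ((y, a) :: past) →
        ∀ f ∈ F,
        |∑ z' : Z, f z' *
            ((∑ sv : Fin ((y, a) :: past).length → S, ∑ sy' : S × Y,
                probTraj ν P π (zipSV ((y, a) :: past) sv) * P (sv ⟨0, by simp⟩) a sy' *
                  (if z' = φ (sigAgg φ0 φ past y) sy'.2 a then 1 else 0)) /
              histProb ν P π ((y, a) :: past)) -
          ∑ z' : Z, f z' * PAIS (sigAgg φ0 φ past y) a z'| ≤ δ)
    -- the AIS dynamic program and a greedy selector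
    (QAIS : Z → A → ℝ) (VAIS : Z → ℝ)
    (hQ : ∀ z a, QAIS z a = rAIS z a + γ * ∑ z' : Z, PAIS z a z' * VAIS z')
    (hV : ∀ z, VAIS z = ⨆ a, QAIS z a)
    (g : Z → A) (hg : ∀ z, QAIS z (g z) = VAIS z)
    (ρ : ℝ) (hρ : 0 < ρ) (hVρ : (fun z => VAIS z / ρ) ∈ F) :
    (⨆ π : {π : List (Y × A) → Y → A → ℝ // validPol π}, valJ γ ν P r π.1) -
        valJ γ ν P r (fun past y a => if a = g (sigAgg φ0 φ past y) then 1 else 0) ≤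
      2 / (1 - γ) * (ε + γ * δ * ρ) := by
  have hν : ν ∈ stdSimplex ℝ (S × Y) := ⟨hν0, hν1⟩
  have hP : ∀ s a, P s a ∈ stdSimplex ℝ (S × Y) := fun s a => ⟨hP0 s a, hP1 s a⟩
  have hr' : ∀ s a, |r s a| ≤ Rmax := fun s a => (abs_of_nonneg (hr s a).1).trans_le (hr s a).2
  have hAP2' : ∀ π, validPol π → NextValueApprox ν P π φ0 φ PAIS VAIS (δ * ρ) := by
    intro π hπ
    have h := NextValueApprox.const_mul ν P π φ0 φ hρ.le fun y a past hpos =>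
      hAP2 π hπ y a past hpos _ hVρ
    rwa [show (fun z => ρ * (VAIS z / ρ)) = VAIS from funext fun z => mul_div_cancel₀ _ hρ.ne',
      mul_comm] at h
  have hQV : ∀ z a, QAIS z a ≤ VAIS z := fun z a =>
    hV z ▸ le_ciSup (Set.finite_range _).bddAbove a
  have hgreedy := validPol_greedyPolicy φ0 φ g
  have hupper : (⨆ π : {π // validPol π}, valJ γ ν P r π.1) ≤
      ∑ sy, ν sy * VAIS (φ0 sy.2) + (ε + γ * (δ * ρ)) / (1 - γ) :=
    haveI : Nonempty {π // validPol π} := ⟨⟨_, hgreedy⟩⟩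
    ciSup_le fun π => valJ_le_of_approx ν P π.1 φ0 φ hν hP π.2 hγ0.le hγ1 hr' (hAP1 π.1 π.2)
      (hAP2' π.1 π.2) hQ hQV
  have hlower := le_valJ_of_approx ν P _ φ0 φ hν hP hgreedy hγ0.le hγ1 hr' (hAP1 _ hgreedy)
    (hAP2' _ hgreedy) hQ fun _ w hw => by rw [greedyPolicy_action_eq ν P φ0 φ g hw, hg]
  have h2 : 2 / (1 - γ) * (ε + γ * δ * ρ) = 2 * ((ε + γ * (δ * ρ)) / (1 - γ)) := by ring
  show _ - valJ γ ν P r (greedyPolicy φ0 φ g) ≤ _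
  rw [h2]
  linarith

end
end

section
/- (No gain from stochastic non-stationary agent-state policies) In a finite POMDP with agent state updated by a fixed recursive function φ, the supremum of the expected discounted reward over non-stationary stochastic agent-state policies equals the supremum over non-stationary deterministic agent-state policies: J_ZNS = J_ZND. -/
open scoped BigOperators

section

variable {S A Y Z : Type*} [Fintype S] [Fintype A] [Fintype Y] [Fintype Z]
variable [DecidableEq A]

/-- Non-stationary deterministic agent-state based policies (the decision rule may depend
on the time index, i.e. the length of the history). -/
def isND (φ0 : Y → Z) (φ : Z → Y → A → Z) (π : List (Y × A) → Y → A → ℝ) : Prop :=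
  ∃ g : ℕ → Z → A, ∀ past y a,
    π past y a = if a = g past.length (sigAgg φ0 φ past y) then 1 else 0

/-- Non-stationary stochastic agent-state based policies. -/
def isNS (φ0 : Y → Z) (φ : Z → Y → A → Z) (π : List (Y × A) → Y → A → ℝ) : Prop :=
  ∃ g : ℕ → Z → A → ℝ, ∀ past y, π past y = g past.length (sigAgg φ0 φ past y)

end

/-!
Draw the deterministic decision rule `c (n, z)` independently from `g n z` for every time
`n ≤ T` and agent state `z`. Along a trajectory the times increase, so no pair `(n, z)` is
consulted twice, and the probability of a trajectory of length at most `T + 1` under the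
stochastic policy `g` is the average of its probabilities under the deterministic policies `c`.
So the `T`-step truncated value of `g` is an average of truncated values of deterministic
policies and is at most the best of them; the discounted rewards after time `T` contribute at
most `γ ^ T * Rmax / (1 - γ)`, which tends to `0`.
-/

section Trajectories

variable {S A Y : Type*} {ν : S × Y → ℝ} {P : S → A → S × Y → ℝ}
  {π π' : List (Y × A) → Y → A → ℝ}

def nextLaw (ν : S × Y → ℝ) (P : S → A → S × Y → ℝ) : List (S × Y × A) → S × Y → ℝ
  | [], sy => ν sy
  | (s₀, _, a₀) :: _, sy => P s₀ a₀ sy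

lemma probTraj_cons (s : S) (y : Y) (a : A) (rest : List (S × Y × A)) :
    probTraj ν P π ((s, y, a) :: rest) =
      nextLaw ν P rest (s, y) * π (rest.map fun u => (u.2.1, u.2.2)) y a *
        probTraj ν P π rest := by
  cases rest <;> rfl

lemma nextLaw_nonneg (hν0 : ∀ sy, 0 ≤ ν sy) (hP0 : ∀ s a sy, 0 ≤ P s a sy)
    (L : List (S × Y × A)) (sy : S × Y) : 0 ≤ nextLaw ν P L sy := by
  rcases L with _ | ⟨⟨s₀, y₀, a₀⟩, _⟩
  exacts [hν0 sy, hP0 s₀ a₀ sy]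

lemma probTraj_congr {L : List (S × Y × A)}
    (h : ∀ past y, past.length < L.length → π past y = π' past y) :
    probTraj ν P π L = probTraj ν P π' L := by
  induction L with
  | nil => rfl
  | cons x rest ih =>
    obtain ⟨s, y, a⟩ := x
    rw [probTraj_cons, probTraj_cons, h _ y (by simp),
      ih fun past y' hp => h past y' (by simp; omega)]

lemma sum_nextLaw [Fintype S] [Fintype Y] (hν1 : ∑ sy, ν sy = 1) (hP1 : ∀ s a, ∑ sy, P s a sy = 1)
    (L : List (S × Y × A)) : ∑ sy, nextLaw ν P L sy = 1 := by
  rcases L with _ | ⟨⟨s₀, y₀, a₀⟩, _⟩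
  exacts [hν1, hP1 s₀ a₀]

variable [Fintype A]

lemma probTraj_nonneg (hν0 : ∀ sy, 0 ≤ ν sy) (hP0 : ∀ s a sy, 0 ≤ P s a sy)
    (hπ : validPol π) (L : List (S × Y × A)) : 0 ≤ probTraj ν P π L := by
  induction L with
  | nil => exact zero_le_one
  | cons x rest ih =>
    obtain ⟨s, y, a⟩ := x
    rw [probTraj_cons]
    exact mul_nonneg (mul_nonneg (nextLaw_nonneg hν0 hP0 _ _) ((hπ _ y).1 a)) ih

variable [Fintype S] [Fintype Y]

lemma sum_probTraj_cons (hν1 : ∑ sy, ν sy = 1) (hP1 : ∀ s a, ∑ sy, P s a sy = 1)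
    (hπ : validPol π) (L : List (S × Y × A)) :
    ∑ x, probTraj ν P π (x :: L) = probTraj ν P π L := by
  calc ∑ x, probTraj ν P π (x :: L)
      = ∑ sy : S × Y, nextLaw ν P L sy * probTraj ν P π L *
          ∑ a, π (L.map fun u => (u.2.1, u.2.2)) sy.2 a := by
        simp only [Fintype.sum_prod_type, Finset.mul_sum]
        refine Finset.sum_congr rfl fun s _ => Finset.sum_congr rfl fun y _ =>
          Finset.sum_congr rfl fun a _ => ?_
        rw [probTraj_cons]
        ring
    _ = probTraj ν P π L := by
        simp only [(hπ _ _).2, mul_one, ← Finset.sum_mul, sum_nextLaw hν1 hP1, one_mul]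

lemma sum_probTraj_ofFn_reverse (hν1 : ∑ sy, ν sy = 1) (hP1 : ∀ s a, ∑ sy, P s a sy = 1)
    (hπ : validPol π) (n : ℕ) :
    ∑ v : Fin n → S × Y × A, probTraj ν P π (List.ofFn v).reverse = 1 := by
  induction n with
  | zero => simp [probTraj]
  | succ n ih =>
    rw [← (Fin.snocEquiv fun _ => S × Y × A).sum_comp, Fintype.sum_prod_type_right, ← ih]
    refine Finset.sum_congr rfl fun v _ => ?_
    simp only [Fin.snocEquiv_apply, List.ofFn_succ', Fin.snoc_last, Fin.snoc_castSucc,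
      List.concat_eq_append, List.reverse_append, List.reverse_singleton, List.singleton_append]
    exact sum_probTraj_cons hν1 hP1 hπ _

lemma expRtime_mem_Icc {r : S → A → ℝ} {Rmax : ℝ} (hr : ∀ s a, r s a ∈ Set.Icc 0 Rmax)
    (hν0 : ∀ sy, 0 ≤ ν sy) (hP0 : ∀ s a sy, 0 ≤ P s a sy) (hν1 : ∑ sy, ν sy = 1)
    (hP1 : ∀ s a, ∑ sy, P s a sy = 1) (hπ : validPol π) (t : ℕ) :
    expRtime ν P r π t ∈ Set.Icc 0 Rmax := by
  have hp := probTraj_nonneg (π := π) hν0 hP0 hπ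
  refine ⟨Finset.sum_nonneg fun v _ => mul_nonneg (hp _) (hr _ _).1, ?_⟩
  calc expRtime ν P r π t
      ≤ ∑ v : Fin (t + 1) → S × Y × A, probTraj ν P π (List.ofFn v).reverse * Rmax :=
        Finset.sum_le_sum fun v _ => mul_le_mul_of_nonneg_left (hr _ _).2 (hp _)
    _ = Rmax := by rw [← Finset.sum_mul, sum_probTraj_ofFn_reverse hν1 hP1 hπ, one_mul]

end Trajectories

section DiscountedSums

variable {γ C : ℝ} {g : ℕ → ℝ}

lemma summable_pow_mul_of_mem_Icc (hγ0 : 0 ≤ γ) (hγ1 : γ < 1)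
    (hg : ∀ t, g t ∈ Set.Icc 0 C) : Summable fun t => γ ^ t * g t :=
  ((summable_geometric_of_lt_one hγ0 hγ1).mul_right C).of_nonneg_of_le
    (fun t => mul_nonneg (pow_nonneg hγ0 t) (hg t).1)
    fun t => mul_le_mul_of_nonneg_left (hg t).2 (pow_nonneg hγ0 t)

lemma sum_range_pow_mul_le_tsum (hγ0 : 0 ≤ γ) (hγ1 : γ < 1)
    (hg : ∀ t, g t ∈ Set.Icc 0 C) (T : ℕ) :
    ∑ t ∈ Finset.range T, γ ^ t * g t ≤ ∑' t, γ ^ t * g t :=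
  (summable_pow_mul_of_mem_Icc hγ0 hγ1 hg).sum_le_tsum _
    fun t _ => mul_nonneg (pow_nonneg hγ0 t) (hg t).1

lemma tsum_pow_mul_le_sum_range_add (hγ0 : 0 ≤ γ) (hγ1 : γ < 1)
    (hg : ∀ t, g t ∈ Set.Icc 0 C) (T : ℕ) :
    ∑' t, γ ^ t * g t ≤ ∑ t ∈ Finset.range T, γ ^ t * g t + γ ^ T * (C / (1 - γ)) := by
  have hgeom := summable_geometric_of_lt_one hγ0 hγ1
  rw [← (summable_pow_mul_of_mem_Icc hγ0 hγ1 hg).sum_add_tsum_nat_add T]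
  gcongr
  calc ∑' i, γ ^ (i + T) * g (i + T)
      ≤ ∑' i, γ ^ T * C * γ ^ i :=
        ((summable_nat_add_iff T).2 (summable_pow_mul_of_mem_Icc hγ0 hγ1 hg)).tsum_le_tsum
          (fun i => (mul_le_mul_of_nonneg_left (hg _).2 (by positivity)).trans_eq (by ring))
          (hgeom.mul_left _)
    _ = γ ^ T * (C / (1 - γ)) := by
        rw [tsum_mul_left, tsum_geometric_of_lt_one hγ0 hγ1]
        ring

end DiscountedSums

section ProductWeights

variable {ι B R : Type*} [Fintype ι]

lemma exists_sum_mul_le {w v : ι → ℝ} (hw0 : ∀ i, 0 ≤ w i) (hw1 : ∑ i, w i = 1) :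
    ∃ i, ∑ j, w j * v j ≤ v i := by
  obtain ⟨i, -, hi⟩ := Finset.exists_max_image Finset.univ v
    (Finset.nonempty_of_sum_ne_zero (hw1 ▸ one_ne_zero))
  refine ⟨i, ?_⟩
  calc ∑ j, w j * v j ≤ ∑ j, w j * v i :=
        Finset.sum_le_sum fun j hj => mul_le_mul_of_nonneg_left (hi j hj) (hw0 j)
    _ = v i := by rw [← Finset.sum_mul, hw1, one_mul]

variable [DecidableEq ι] [Fintype B] [CommSemiring R]

/-- Under the product weights `∏ i, h i (c i)`, the coordinate `c i₀` is independent of any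
`G` that does not look at it. -/
lemma sum_prod_mul_eval_mul_of_update_eq (h : ι → B → R) {i₀ : ι} (hi₀ : ∑ b, h i₀ b = 1)
    (F : B → R) {G : (ι → B) → R} (hG : ∀ c b, G (Function.update c i₀ b) = G c) :
    ∑ c : ι → B, (∏ i, h i (c i)) * (F (c i₀) * G c) =
      (∑ b, h i₀ b * F b) * ∑ c : ι → B, (∏ i, h i (c i)) * G c := by
  have hW : ∀ (c : ι → B) b,
      (∏ i, h i (Function.update c i₀ b i)) * h i₀ (c i₀) = h i₀ b * ∏ i, h i (c i) := by
    intro c b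
    simp_rw [Function.apply_update (fun i => h i) c i₀ b]
    rw [Finset.prod_update_of_mem (Finset.mem_univ _),
      Finset.prod_eq_mul_prod_sdiff_singleton_of_mem (Finset.mem_univ i₀)]
    ring
  -- swapping `c i₀` with an independent copy `b` is an involution of `(ι → B) × B`
  have hΦ : Function.Involutive fun p : (ι → B) × B => (Function.update p.1 i₀ p.2, p.1 i₀) :=
    fun p => by simp
  calc ∑ c : ι → B, (∏ i, h i (c i)) * (F (c i₀) * G c)
      = ∑ p : (ι → B) × B, (∏ i, h i (p.1 i)) * (F (p.1 i₀) * G p.1) * h i₀ p.2 := by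
        simp only [Fintype.sum_prod_type, ← Finset.mul_sum, hi₀, mul_one]
    _ = ∑ p : (ι → B) × B, h i₀ p.2 * F p.2 * ((∏ i, h i (p.1 i)) * G p.1) := by
        rw [← Equiv.sum_comp (hΦ.toPerm _)]
        refine Finset.sum_congr rfl fun p _ => ?_
        simp only [Function.Involutive.coe_toPerm, Function.update_self, hG]
        calc _ = ((∏ i, h i (Function.update p.1 i₀ p.2 i)) * h i₀ (p.1 i₀)) * F p.2 * G p.1 := by
              ring
          _ = _ := by rw [hW]; ring
    _ = (∑ b, h i₀ b * F b) * ∑ c : ι → B, (∏ i, h i (c i)) * G c := by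
        rw [Fintype.sum_prod_type_right, Finset.sum_mul_sum]

end ProductWeights

section AgentStatePolicies

variable {S A Y Z : Type*} (φ0 : Y → Z) (φ : Z → Y → A → Z)

def agentPolicy (g : ℕ → Z → A → ℝ) : List (Y × A) → Y → A → ℝ :=
  fun past y => g past.length (sigAgg φ0 φ past y)

def clampRule {T : ℕ} (c : Fin (T + 1) × Z → A) : ℕ → Z → A :=
  fun n z => c (Fin.clamp n T, z)

def detPolicy [DecidableEq A] (f : ℕ → Z → A) : List (Y × A) → Y → A → ℝ :=
  agentPolicy φ0 φ fun n z a => if a = f n z then 1 else 0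

lemma validPol_detPolicy [DecidableEq A] [Fintype A] (f : ℕ → Z → A) :
    validPol (detPolicy φ0 φ f) :=
  fun _ _ => ⟨fun _ => by simp only [detPolicy, agentPolicy]; positivity,
    by simp [detPolicy, agentPolicy]⟩

variable [Fintype Z]

/-- The weight of the deterministic rules `c` when each `c (n, z)` is drawn independently
from `g n z`. -/
def ruleWeight (g : ℕ → Z → A → ℝ) {T : ℕ} (c : Fin (T + 1) × Z → A) : ℝ :=
  ∏ p, g p.1 p.2 (c p)

lemma ruleWeight_nonneg {g : ℕ → Z → A → ℝ} (hg0 : ∀ n z a, 0 ≤ g n z a) {T : ℕ}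
    (c : Fin (T + 1) × Z → A) : 0 ≤ ruleWeight g c :=
  Finset.prod_nonneg fun _ _ => hg0 _ _ _

variable [Fintype A] [DecidableEq Z]

lemma sum_ruleWeight {g : ℕ → Z → A → ℝ} (hg1 : ∀ n z, ∑ a, g n z a = 1) (T : ℕ) :
    ∑ c : Fin (T + 1) × Z → A, ruleWeight g c = 1 := by
  simp only [ruleWeight, ← Fintype.prod_sum fun (p : Fin (T + 1) × Z) a => g p.1 p.2 a, hg1,
    Finset.prod_const_one]

variable [DecidableEq A] {φ0 φ} {g : ℕ → Z → A → ℝ} {ν : S × Y → ℝ} {P : S → A → S × Y → ℝ}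

lemma sum_ruleWeight_mul_probTraj_detPolicy (hg1 : ∀ n z, ∑ a, g n z a = 1) {T : ℕ}
    {L : List (S × Y × A)} (hL : L.length ≤ T + 1) :
    ∑ c : Fin (T + 1) × Z → A, ruleWeight g c * probTraj ν P (detPolicy φ0 φ (clampRule c)) L =
      probTraj ν P (agentPolicy φ0 φ g) L := by
  induction L with
  | nil => simpa [probTraj] using sum_ruleWeight hg1 T
  | cons x rest ih =>
    obtain ⟨s, y, a⟩ := x
    have hrest : rest.length < T + 1 := by simpa using hL
    -- the only decision rule used at the newest step of the trajectory
    set p₀ : Fin (T + 1) × Z :=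
      (Fin.clamp rest.length T, sigAgg φ0 φ (rest.map fun u => (u.2.1, u.2.2)) y)
    have hstep : ∀ c, probTraj ν P (detPolicy φ0 φ (clampRule c)) ((s, y, a) :: rest) =
        nextLaw ν P rest (s, y) *
          ((if a = c p₀ then 1 else 0) * probTraj ν P (detPolicy φ0 φ (clampRule c)) rest) := by
      intro c
      simp only [probTraj_cons, detPolicy, agentPolicy, clampRule, List.length_map, p₀]
      ring
    have hG : ∀ c b, probTraj ν P (detPolicy φ0 φ (clampRule (Function.update c p₀ b))) rest =
        probTraj ν P (detPolicy φ0 φ (clampRule c)) rest := by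
      refine fun c b => probTraj_congr fun past y' hp => ?_
      have hne : (Fin.clamp past.length T, sigAgg φ0 φ past y') ≠ p₀ := by
        simp only [p₀, ne_eq, Prod.mk.injEq, Fin.ext_iff, Fin.coe_clamp]
        omega
      have hrule : clampRule (Function.update c p₀ b) past.length (sigAgg φ0 φ past y') =
          clampRule c past.length (sigAgg φ0 φ past y') := Function.update_of_ne hne _ _
      simp only [detPolicy, agentPolicy, hrule]
    have hsplit := sum_prod_mul_eval_mul_of_update_eq (i₀ := p₀)
      (fun (p : Fin (T + 1) × Z) b => g p.1 p.2 b) (hg1 _ _)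
      (fun b => if a = b then (1 : ℝ) else 0)
      (G := fun c => probTraj ν P (detPolicy φ0 φ (clampRule c)) rest) hG
    beta_reduce at hsplit
    simp only [ruleWeight] at ih ⊢
    calc ∑ c : Fin (T + 1) × Z → A, (∏ p, g p.1 p.2 (c p)) *
          probTraj ν P (detPolicy φ0 φ (clampRule c)) ((s, y, a) :: rest)
        = nextLaw ν P rest (s, y) * ∑ c : Fin (T + 1) × Z → A, (∏ p, g p.1 p.2 (c p)) *
            ((if a = c p₀ then 1 else 0) * probTraj ν P (detPolicy φ0 φ (clampRule c)) rest) := by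
          simp only [hstep, Finset.mul_sum]
          exact Finset.sum_congr rfl fun c _ => by ring
      _ = probTraj ν P (agentPolicy φ0 φ g) ((s, y, a) :: rest) := by
          rw [hsplit, ih hrest.le]
          simp only [mul_ite, mul_one, mul_zero, Finset.sum_ite_eq, Finset.mem_univ, if_true,
            probTraj_cons, agentPolicy, List.length_map, p₀, Fin.coe_clamp,
            min_eq_left (Nat.le_of_lt_succ hrest)]
          ring

variable [Fintype S] [Fintype Y]

lemma expRtime_agentPolicy_eq_sum (hg1 : ∀ n z, ∑ a, g n z a = 1) (r : S → A → ℝ) {T t : ℕ}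
    (ht : t ≤ T) :
    expRtime ν P r (agentPolicy φ0 φ g) t = ∑ c : Fin (T + 1) × Z → A,
      ruleWeight g c * expRtime ν P r (detPolicy φ0 φ (clampRule c)) t := by
  simp only [expRtime, Finset.mul_sum]
  rw [Finset.sum_comm]
  refine Finset.sum_congr rfl fun v _ => ?_
  rw [← sum_ruleWeight_mul_probTraj_detPolicy hg1 (by simpa using ht), Finset.sum_mul]
  exact Finset.sum_congr rfl fun c _ => mul_assoc _ _ _

lemma exists_sum_range_le_detPolicy (hg0 : ∀ n z a, 0 ≤ g n z a)
    (hg1 : ∀ n z, ∑ a, g n z a = 1) (γ : ℝ) (r : S → A → ℝ) (T : ℕ) :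
    ∃ f : ℕ → Z → A, ∑ t ∈ Finset.range T, γ ^ t * expRtime ν P r (agentPolicy φ0 φ g) t ≤
      ∑ t ∈ Finset.range T, γ ^ t * expRtime ν P r (detPolicy φ0 φ f) t := by
  obtain ⟨c, hc⟩ := exists_sum_mul_le (ruleWeight_nonneg hg0) (sum_ruleWeight hg1 T)
    (v := fun c => ∑ t ∈ Finset.range T, γ ^ t * expRtime ν P r (detPolicy φ0 φ (clampRule c)) t)
  refine ⟨clampRule c, le_of_eq_of_le ?_ hc⟩
  simp only [Finset.mul_sum]
  rw [Finset.sum_comm]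
  refine Finset.sum_congr rfl fun t ht => ?_
  rw [expRtime_agentPolicy_eq_sum hg1 r (Finset.mem_range.1 ht).le, Finset.mul_sum]
  exact Finset.sum_congr rfl fun c _ => mul_left_comm _ _ _

lemma exists_valJ_agentPolicy_le_detPolicy_add {γ Rmax : ℝ} (hγ0 : 0 ≤ γ) (hγ1 : γ < 1)
    {r : S → A → ℝ} (hr : ∀ s a, r s a ∈ Set.Icc 0 Rmax) (hν0 : ∀ sy, 0 ≤ ν sy)
    (hν1 : ∑ sy, ν sy = 1) (hP0 : ∀ s a sy, 0 ≤ P s a sy) (hP1 : ∀ s a, ∑ sy, P s a sy = 1)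
    (hg0 : ∀ n z a, 0 ≤ g n z a) (hg1 : ∀ n z, ∑ a, g n z a = 1) {ε : ℝ} (hε : 0 < ε) :
    ∃ f : ℕ → Z → A, valJ γ ν P r (agentPolicy φ0 φ g) ≤ valJ γ ν P r (detPolicy φ0 φ f) + ε := by
  obtain ⟨T, hT⟩ := (((tendsto_pow_atTop_nhds_zero_of_lt_one hγ0 hγ1).mul_const
    (Rmax / (1 - γ))).eventually (gt_mem_nhds (by rwa [zero_mul]))).exists
  obtain ⟨f, hf⟩ :=
    exists_sum_range_le_detPolicy (φ0 := φ0) (φ := φ) (ν := ν) (P := P) hg0 hg1 γ r T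
  have hexp := fun π => expRtime_mem_Icc (π := π) hr hν0 hP0 hν1 hP1
  refine ⟨f, ?_⟩
  calc valJ γ ν P r (agentPolicy φ0 φ g)
      ≤ ∑ t ∈ Finset.range T, γ ^ t * expRtime ν P r (agentPolicy φ0 φ g) t +
          γ ^ T * (Rmax / (1 - γ)) :=
        tsum_pow_mul_le_sum_range_add hγ0 hγ1 (hexp _ fun _ _ => ⟨hg0 _ _, hg1 _ _⟩) T
    _ ≤ valJ γ ν P r (detPolicy φ0 φ f) + ε := by
        gcongr
        exact hf.trans (sum_range_pow_mul_le_tsum hγ0 hγ1 (hexp _ (validPol_detPolicy φ0 φ f)) T)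

end AgentStatePolicies

section AgentStateClasses

variable {A Y Z : Type*} {φ0 : Y → Z} {φ : Z → Y → A → Z} {π : List (Y × A) → Y → A → ℝ}

lemma isND.isNS [DecidableEq A] (h : isND φ0 φ π) : isNS φ0 φ π :=
  let ⟨f, hf⟩ := h
  ⟨fun n z a => if a = f n z then 1 else 0, fun past y => funext (hf past y)⟩

lemma exists_agentPolicy_eq_of_isNS [Fintype A] (hπ : validPol π) (hns : isNS φ0 φ π) (y₀ : Y) :
    ∃ g : ℕ → Z → A → ℝ, (∀ n z a, 0 ≤ g n z a) ∧ (∀ n z, ∑ a, g n z a = 1) ∧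
      π = agentPolicy φ0 φ g := by
  classical
  obtain ⟨g, hg⟩ := hns
  -- at agent states that no history reaches, `g` is replaced by some distribution of `π`
  let g' : ℕ → Z → A → ℝ := fun n z =>
    if ∃ past y, past.length = n ∧ sigAgg φ0 φ past y = z then g n z else π [] y₀
  have hg' : ∀ n z, ∃ past y, g' n z = π past y := by
    intro n z
    by_cases h : ∃ past y, past.length = n ∧ sigAgg φ0 φ past y = z
    · obtain ⟨past, y, rfl, rfl⟩ := h
      exact ⟨past, y, (if_pos ⟨past, y, rfl, rfl⟩).trans (hg past y).symm⟩
    · exact ⟨[], y₀, if_neg h⟩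
  refine ⟨g', fun n z a => ?_, fun n z => ?_, funext₂ fun past y => ?_⟩
  · obtain ⟨past, y, h⟩ := hg' n z
    exact h ▸ (hπ past y).1 a
  · obtain ⟨past, y, h⟩ := hg' n z
    exact h ▸ (hπ past y).2
  · exact (hg past y).trans (if_pos ⟨past, y, rfl, rfl⟩).symm

end AgentStateClasses

section

variable {S A Y Z : Type*} [Fintype S] [Fintype A] [Fintype Y] [Fintype Z]
variable [DecidableEq A]

theorem stmt_18_general
    (γ : ℝ) (hγ0 : 0 < γ) (hγ1 : γ < 1)
    (Rmax : ℝ) (r : S → A → ℝ) (hr : ∀ s a, r s a ∈ Set.Icc (0 : ℝ) Rmax)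
    (ν : S × Y → ℝ) (hν0 : ∀ sy, 0 ≤ ν sy) (hν1 : ∑ sy : S × Y, ν sy = 1)
    (P : S → A → S × Y → ℝ) (hP0 : ∀ s a sy, 0 ≤ P s a sy)
    (hP1 : ∀ s a, ∑ sy : S × Y, P s a sy = 1)
    (φ0 : Y → Z) (φ : Z → Y → A → Z) :
    (⨆ π : {π : List (Y × A) → Y → A → ℝ // validPol π ∧ isNS φ0 φ π},
        valJ γ ν P r π.1) =
      ⨆ π : {π : List (Y × A) → Y → A → ℝ // validPol π ∧ isND φ0 φ π},
        valJ γ ν P r π.1 := by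
  classical
  obtain ⟨-, y₀⟩ := (Finset.univ_nonempty_iff.1 (Finset.nonempty_of_sum_ne_zero
    (hν1 ▸ one_ne_zero))).some
  have hexp := fun π hπ => expRtime_mem_Icc (π := π) hr hν0 hP0 hν1 hP1 hπ
  have hJ0 : ∀ π, validPol π → 0 ≤ valJ γ ν P r π := fun π hπ => by
    simpa [valJ] using sum_range_pow_mul_le_tsum hγ0.le hγ1 (hexp π hπ) 0
  have hbdd : ∀ p : (List (Y × A) → Y → A → ℝ) → Prop,
      BddAbove (Set.range fun π : {π // validPol π ∧ p π} => valJ γ ν P r π.1) := fun p =>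
    ⟨Rmax / (1 - γ), Set.forall_mem_range.2 fun π => by
      simpa [valJ] using tsum_pow_mul_le_sum_range_add hγ0.le hγ1 (hexp π.1 π.2.1) 0⟩
  refine le_antisymm (Real.iSup_le (fun ⟨π, hπ, hns⟩ => ?_) (Real.iSup_nonneg fun π => hJ0 _ π.2.1))
    (Real.iSup_le (fun π => le_ciSup_of_le (hbdd _) ⟨π.1, π.2.1, π.2.2.isNS⟩ le_rfl)
      (Real.iSup_nonneg fun π => hJ0 _ π.2.1))
  obtain ⟨g, hg0, hg1, rfl⟩ := exists_agentPolicy_eq_of_isNS hπ hns y₀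
  refine le_of_forall_pos_le_add fun ε hε => ?_
  obtain ⟨f, hf⟩ :=
    exists_valJ_agentPolicy_le_detPolicy_add hγ0.le hγ1 hr hν0 hν1 hP0 hP1 hg0 hg1 hε
  exact hf.trans (add_le_add_left (le_ciSup (hbdd _)
    ⟨detPolicy φ0 φ f, validPol_detPolicy φ0 φ f, f, fun _ _ _ => rfl⟩) _)

/-- **No gain from stochastic non-stationary agent-state policies:** `J_ZNS = J_ZND`. -/
theorem stmt_18 [Nonempty A]
    (γ : ℝ) (hγ0 : 0 < γ) (hγ1 : γ < 1)
    (Rmax : ℝ) (r : S → A → ℝ) (hr : ∀ s a, r s a ∈ Set.Icc (0 : ℝ) Rmax)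
    (ν : S × Y → ℝ) (hν0 : ∀ sy, 0 ≤ ν sy) (hν1 : ∑ sy : S × Y, ν sy = 1)
    (P : S → A → S × Y → ℝ) (hP0 : ∀ s a sy, 0 ≤ P s a sy)
    (hP1 : ∀ s a, ∑ sy : S × Y, P s a sy = 1)
    (φ0 : Y → Z) (φ : Z → Y → A → Z) :
    (⨆ π : {π : List (Y × A) → Y → A → ℝ // validPol π ∧ isNS φ0 φ π},
        valJ γ ν P r π.1) =
      ⨆ π : {π : List (Y × A) → Y → A → ℝ // validPol π ∧ isND φ0 φ π},
        valJ γ ν P r π.1 :=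
  stmt_18_general γ hγ0 hγ1 Rmax r hr ν hν0 hν1 P hP0 hP1 φ0 φ

end
end
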